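/- arXiv:1606.00553 — 2 statements merged into one kernel-verified Lean document; each statement's English description precedes it below -/
import Mathlib

section
/- For all integers 0 ≤ j ≤ n: max( |R_{j,n} − δ_{j,n}| , |(R⁻¹)_{j,n} − δ_{j,n}| ) ≤ √(ε_j · ε_n) / (1 − ‖C‖²), where R_{j,n} = ⟨R e_n, e_j⟩ and (R⁻¹)_{j,n} = ⟨R⁻¹ e_n, e_j⟩. -/
/-!
Since `R` maps each finite-dimensional space `span {e₀, …, eₙ}` injectively into itself, it maps
it onto itself, so `R⁻¹` is upper triangular as well. From `R*R = I - C*C` and `RR⁻¹ = I` we get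
`R⁻¹ = R* + C*C R⁻¹` and `R = (R⁻¹)* (I - C*C)`; hence the entries above the diagonal of `R⁻¹`
and of `R` are, up to sign, inner products of `C e_j` and `C R⁻¹ e_n`, and everything reduces to
`‖C R⁻¹ e_n‖ ≤ ‖C e_n‖ / (1 - ‖C‖²)`. For this, put `x = R⁻¹ e_n` (supported in `[0, n]`) and
`z = C*C x`; then `‖C x‖² = ⟪x, z⟫ = R_{n,n} z_n + ∑_{j ≤ n} |z_j|² ≤ ‖C e_n‖ ‖C x‖ + ‖C‖² ‖C x‖²`.
On the diagonal, `R_{n,n} (R⁻¹)_{n,n} = 1` and `(R⁻¹)_{n,n} - R_{n,n} = z_n`, and for `ρ > 0` both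
`|ρ - 1|` and `|ρ⁻¹ - 1|` are at most `|ρ⁻¹ - ρ|`.
-/

open ContinuousLinearMap
open scoped lp ComplexConjugate InnerProductSpace ENNReal

local notation "𝐞" n:max => lp.single 2 n 1

section Adjoint

variable {𝕜 E : Type*} [RCLike 𝕜] [NormedAddCommGroup E] [InnerProductSpace 𝕜 E] [CompleteSpace E]
  {C R S : E →L[𝕜] E}

theorem eq_adjoint_add_of_adjoint_comp_self_eq (hM : adjoint R ∘L R = 1 - adjoint C ∘L C)
    (hRS : R ∘L S = 1) : S = adjoint R + adjoint C ∘L C ∘L S :=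
  calc S = (adjoint R ∘L R + adjoint C ∘L C) ∘L S := by rw [hM, sub_add_cancel, one_def, id_comp]
    _ = adjoint R ∘L (R ∘L S) + adjoint C ∘L C ∘L S := by rw [add_comp, comp_assoc, comp_assoc]
    _ = adjoint R + adjoint C ∘L C ∘L S := by rw [hRS, one_def, comp_id]

theorem inner_apply_eq_conj_add_of_adjoint_comp_self_eq
    (hM : adjoint R ∘L R = 1 - adjoint C ∘L C) (hRS : R ∘L S = 1) (u v : E) :
    ⟪u, S v⟫_𝕜 = conj ⟪v, R u⟫_𝕜 + ⟪C u, C (S v)⟫_𝕜 := by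
  conv_lhs => rw [eq_adjoint_add_of_adjoint_comp_self_eq hM hRS]
  rw [add_apply, inner_add_right, adjoint_inner_right, comp_apply, comp_apply,
    adjoint_inner_right, inner_conj_symm]

theorem inner_apply_eq_sub_of_adjoint_comp_self_eq
    (hM : adjoint R ∘L R = 1 - adjoint C ∘L C) (hRS : R ∘L S = 1) (u v : E) :
    ⟪u, R v⟫_𝕜 = ⟪S u, v⟫_𝕜 - ⟪C (S u), C v⟫_𝕜 := by
  have hMv : adjoint R (R v) = v - adjoint C (C v) := by
    simpa using congr($hM v)
  have hRSu : R (S u) = u := by simpa using congr($hRS u)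
  rw [← hRSu, ← adjoint_inner_right, hRSu, hMv, inner_sub_right, adjoint_inner_right]

theorem norm_apply_le_of_adjoint_comp_self_eq (hM : adjoint R ∘L R = 1 - adjoint C ∘L C) (u : E) :
    ‖R u‖ ≤ ‖u‖ := by
  have h : ‖R u‖ ^ 2 = ‖u‖ ^ 2 - ‖C u‖ ^ 2 := by
    have := congr(RCLike.re ⟪u, $hM u⟫_𝕜)
    simpa [adjoint_inner_right, inner_sub_right, inner_self_eq_norm_sq] using this
  nlinarith [norm_nonneg (R u), norm_nonneg u, norm_nonneg (C u)]

end Adjoint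

theorem Submodule.mapsTo_of_leftInverse {K V : Type*} [Field K] [AddCommGroup V] [Module K V]
    {W : Submodule K V} [FiniteDimensional K W] {f g : V →ₗ[K] V}
    (hgf : Function.LeftInverse g f) (hf : Set.MapsTo f W W) : Set.MapsTo g W W := by
  intro y hy
  have hinj : Function.Injective (f.restrict hf) := fun a b hab =>
    Subtype.ext (hgf.injective (congrArg Subtype.val hab))
  obtain ⟨v, hv⟩ := LinearMap.injective_iff_surjective.mp hinj ⟨y, hy⟩
  have hfv : f v = y := congrArg Subtype.val hv
  rw [← hfv, hgf]
  exact v.2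

namespace lp

variable {ι 𝕜 : Type*} [RCLike 𝕜] {p : ℝ≥0∞} [Fact (1 ≤ p)]

def supported (p : ℝ≥0∞) [Fact (1 ≤ p)] (s : Finset ι) : Submodule 𝕜 (lp (fun _ : ι => 𝕜) p) where
  carrier := {f | ∀ i ∉ s, f i = 0}
  add_mem' {_ _} hf hg i hi := by simp [hf i hi, hg i hi]
  zero_mem' _ _ := rfl
  smul_mem' c f hf i hi := by simp [hf i hi]

theorem sum_norm_sq_le (f : ℓ²(ι, 𝕜)) (s : Finset ι) : ∑ i ∈ s, ‖f i‖ ^ 2 ≤ ‖f‖ ^ 2 := by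
  have := lp.sum_rpow_le_norm_rpow (by norm_num : 0 < (2 : ℝ≥0∞).toReal) f s
  simpa using this

variable {s : Finset ι} {f : lp (fun _ : ι => 𝕜) p}

variable [DecidableEq ι]

theorem single_one_mem_supported {i : ι} (hi : i ∈ s) :
    lp.single p i (1 : 𝕜) ∈ supported p s := fun _ hj =>
  lp.single_apply_ne p i _ (ne_of_mem_of_not_mem hi hj).symm

theorem eq_sum_single_of_mem_supported (hf : f ∈ supported p s) :
    f = ∑ i ∈ s, f i • lp.single p i (1 : 𝕜) := by
  ext j
  simp only [lp.coeFn_sum, Finset.sum_apply, lp.coeFn_smul, Pi.smul_apply, lp.single_apply,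
    Pi.single_apply, smul_eq_mul, mul_ite, mul_one, mul_zero, Finset.sum_ite_eq]
  split_ifs with hj
  · rfl
  · exact hf j hj

instance : FiniteDimensional 𝕜 (supported (𝕜 := 𝕜) p s) := by
  classical
  refine Submodule.finiteDimensional_of_le
    (S₂ := Submodule.span 𝕜 (s.image fun i => lp.single p i (1 : 𝕜))) fun f hf => ?_
  rw [eq_sum_single_of_mem_supported hf]
  exact Submodule.sum_mem _ fun i hi =>
    Submodule.smul_mem _ _ (Submodule.subset_span (Finset.mem_image_of_mem _ hi))

theorem inner_single_one_left (i : ι) (f : ℓ²(ι, 𝕜)) : ⟪lp.single 2 i (1 : 𝕜), f⟫_𝕜 = f i := by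
  rw [lp.inner_single_left, RCLike.inner_apply, map_one, mul_one]

theorem inner_eq_sum_of_mem_supported {f : ℓ²(ι, 𝕜)} (hf : f ∈ supported 2 s) (g : ℓ²(ι, 𝕜)) :
    ⟪f, g⟫_𝕜 = ∑ i ∈ s, conj (f i) * g i := by
  conv_lhs => rw [eq_sum_single_of_mem_supported hf]
  simp only [sum_inner, inner_smul_left, inner_single_one_left]

end lp

section Triangular

variable {𝕜 : Type*} [RCLike 𝕜] {p : ℝ≥0∞} [Fact (1 ≤ p)]

/-- Upper triangularity, phrased as invariance of every `span {e₀, …, eₙ}`. -/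
def IsUpperTriangular (B : lp (fun _ : ℕ => 𝕜) p →L[𝕜] lp (fun _ : ℕ => 𝕜) p) : Prop :=
  ∀ n, ∀ f ∈ lp.supported p (Finset.Iic n), B f ∈ lp.supported p (Finset.Iic n)

variable {A B : lp (fun _ : ℕ => 𝕜) p →L[𝕜] lp (fun _ : ℕ => 𝕜) p}

theorem isUpperTriangular_iff :
    IsUpperTriangular B ↔ ∀ j k, k < j → B (lp.single p k 1) j = 0 := by
  refine ⟨fun hB j k hkj => hB k _ (lp.single_one_mem_supported (Finset.mem_Iic.mpr le_rfl)) j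
    (by simpa using hkj), fun hB n f hf => ?_⟩
  rw [lp.eq_sum_single_of_mem_supported hf, map_sum]
  refine Submodule.sum_mem _ fun i hi => ?_
  rw [map_smul]
  refine Submodule.smul_mem _ _ fun j hj => hB j i ?_
  simp only [Finset.mem_Iic, not_le] at hi hj
  exact hi.trans_lt hj

theorem IsUpperTriangular.of_leftInverse (hB : IsUpperTriangular B) (hAB : A ∘L B = 1) :
    IsUpperTriangular A := fun n =>
  Submodule.mapsTo_of_leftInverse (f := B.toLinearMap) (g := A.toLinearMap)
    (fun x => by simpa using congr($hAB x)) (hB n)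

theorem IsUpperTriangular.apply_of_mem_supported (hB : IsUpperTriangular B) {n : ℕ}
    {f : lp (fun _ : ℕ => 𝕜) p} (hf : f ∈ lp.supported p (Finset.Iic n)) :
    B f n = B (lp.single p n 1) n * f n := by
  conv_lhs => rw [lp.eq_sum_single_of_mem_supported hf]
  rw [map_sum, lp.coeFn_sum, Finset.sum_apply, Finset.sum_eq_single n, map_smul, lp.coeFn_smul,
    Pi.smul_apply, smul_eq_mul, mul_comm]
  · intro i hi hin
    rw [map_smul, lp.coeFn_smul, Pi.smul_apply, isUpperTriangular_iff.mp hB n i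
      (lt_of_le_of_ne (Finset.mem_Iic.mp hi) hin), smul_zero]
  · simp

end Triangular

section Bound

variable {𝕜 : Type*} [RCLike 𝕜] {C R S : ℓ²(ℕ, 𝕜) →L[𝕜] ℓ²(ℕ, 𝕜)}

theorem apply_inverse_single_eq (hM : adjoint R ∘L R = 1 - adjoint C ∘L C) (hRS : R ∘L S = 1)
    (j n : ℕ) : S (𝐞 n) j = conj (R (𝐞 j) n) + adjoint C (C (S (𝐞 n))) j := by
  have h := inner_apply_eq_conj_add_of_adjoint_comp_self_eq hM hRS (𝐞 j) (𝐞 n)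
  rwa [← adjoint_inner_right C, lp.inner_single_one_left, lp.inner_single_one_left,
    lp.inner_single_one_left] at h

theorem norm_sq_apply_inverse_single_eq (hR : IsUpperTriangular R) (hS : IsUpperTriangular S)
    (hM : adjoint R ∘L R = 1 - adjoint C ∘L C) (hRS : R ∘L S = 1) (n : ℕ) :
    ‖C (S (𝐞 n))‖ ^ 2 = RCLike.re (R (𝐞 n) n * adjoint C (C (S (𝐞 n))) n)
      + ∑ j ∈ Finset.Iic n, ‖adjoint C (C (S (𝐞 n))) j‖ ^ 2 := by
  set x := S (𝐞 n)
  set z := adjoint C (C x)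
  have hx : x ∈ lp.supported 2 (Finset.Iic n) :=
    hS n _ (lp.single_one_mem_supported (Finset.mem_Iic.mpr le_rfl))
  have hdiag : ∑ j ∈ Finset.Iic n, R (𝐞 j) n * z j = R (𝐞 n) n * z n := by
    refine Finset.sum_eq_single n (fun j hj hjn => ?_) (by simp)
    rw [isUpperTriangular_iff.mp hR n j (lt_of_le_of_ne (Finset.mem_Iic.mp hj) hjn), zero_mul]
  have hinner : ⟪x, z⟫_𝕜 = R (𝐞 n) n * z n + ∑ j ∈ Finset.Iic n, (‖z j‖ ^ 2 : 𝕜) := by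
    have hxz (j : ℕ) : x j = conj (R (𝐞 j) n) + z j := apply_inverse_single_eq hM hRS j n
    simp only [lp.inner_eq_sum_of_mem_supported hx, hxz, map_add,
      RCLike.conj_conj, add_mul, Finset.sum_add_distrib, hdiag, RCLike.conj_mul]
  rw [← inner_self_eq_norm_sq (𝕜 := 𝕜), ← adjoint_inner_right, hinner, map_add, map_sum]
  simp_rw [← RCLike.ofReal_pow, RCLike.ofReal_re]

theorem norm_apply_inverse_single_le (hC : ‖C‖ < 1) (hR : IsUpperTriangular R)
    (hS : IsUpperTriangular S) (hM : adjoint R ∘L R = 1 - adjoint C ∘L C) (hRS : R ∘L S = 1)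
    (n : ℕ) : ‖C (S (𝐞 n))‖ ≤ ‖C (𝐞 n)‖ / (1 - ‖C‖ ^ 2) := by
  set x := S (𝐞 n)
  set z := adjoint C (C x)
  have hdiag : ‖R (𝐞 n) n‖ ≤ 1 := calc
    ‖R (𝐞 n) n‖ ≤ ‖R (𝐞 n)‖ := lp.norm_apply_le_norm two_ne_zero _ _
    _ ≤ ‖(𝐞 n : ℓ²(ℕ, 𝕜))‖ := norm_apply_le_of_adjoint_comp_self_eq hM _
    _ = 1 := by rw [lp.norm_single (by norm_num), norm_one]
  have hzn : ‖z n‖ ≤ ‖C (𝐞 n)‖ * ‖C x‖ := by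
    rw [← lp.inner_single_one_left, adjoint_inner_right]
    exact norm_inner_le_norm _ _
  have hz : ‖z‖ ≤ ‖C‖ * ‖C x‖ :=
    (le_opNorm _ _).trans_eq (by rw [LinearIsometryEquiv.norm_map])
  have key : ‖C x‖ ^ 2 ≤ ‖C (𝐞 n)‖ * ‖C x‖ + ‖C‖ ^ 2 * ‖C x‖ ^ 2 := by
    refine (norm_sq_apply_inverse_single_eq hR hS hM hRS n).trans_le (add_le_add ?_ ?_)
    · calc RCLike.re (R (𝐞 n) n * z n) ≤ ‖R (𝐞 n) n‖ * ‖z n‖ := by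
            rw [← norm_mul]; exact RCLike.re_le_norm _
        _ ≤ 1 * (‖C (𝐞 n)‖ * ‖C x‖) := by gcongr
        _ = ‖C (𝐞 n)‖ * ‖C x‖ := one_mul _
    · calc ∑ j ∈ Finset.Iic n, ‖z j‖ ^ 2 ≤ ‖z‖ ^ 2 := lp.sum_norm_sq_le z _
        _ ≤ (‖C‖ * ‖C x‖) ^ 2 := by gcongr
        _ = ‖C‖ ^ 2 * ‖C x‖ ^ 2 := mul_pow _ _ _
  rw [le_div_iff₀ (by nlinarith [norm_nonneg C])]
  rcases (norm_nonneg (C x)).eq_or_lt with h0 | hpos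
  · rw [← h0, zero_mul]
    exact norm_nonneg _
  · nlinarith

theorem norm_adjoint_apply_inverse_single_le {n : ℕ}
    (hbound : ‖C (S (𝐞 n))‖ ≤ ‖C (𝐞 n)‖ / (1 - ‖C‖ ^ 2)) (j : ℕ) :
    ‖adjoint C (C (S (𝐞 n))) j‖ ≤ ‖C (𝐞 j)‖ * ‖C (𝐞 n)‖ / (1 - ‖C‖ ^ 2) := by
  rw [← lp.inner_single_one_left, adjoint_inner_right, mul_div_assoc]
  exact (norm_inner_le_norm _ _).trans (by gcongr)

theorem norm_inverse_apply_single_le_of_lt (hR : IsUpperTriangular R)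
    (hM : adjoint R ∘L R = 1 - adjoint C ∘L C) (hRS : R ∘L S = 1) {j n : ℕ}
    (hbound : ‖C (S (𝐞 n))‖ ≤ ‖C (𝐞 n)‖ / (1 - ‖C‖ ^ 2)) (hjn : j < n) :
    ‖S (𝐞 n) j‖ ≤ ‖C (𝐞 j)‖ * ‖C (𝐞 n)‖ / (1 - ‖C‖ ^ 2) := by
  rw [apply_inverse_single_eq hM hRS, isUpperTriangular_iff.mp hR n j hjn, map_zero, zero_add]
  exact norm_adjoint_apply_inverse_single_le hbound j

theorem norm_apply_single_le_of_lt (hS : IsUpperTriangular S)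
    (hM : adjoint R ∘L R = 1 - adjoint C ∘L C) (hRS : R ∘L S = 1) {j n : ℕ}
    (hbound : ‖C (S (𝐞 j))‖ ≤ ‖C (𝐞 j)‖ / (1 - ‖C‖ ^ 2)) (hjn : j < n) :
    ‖R (𝐞 n) j‖ ≤ ‖C (𝐞 j)‖ * ‖C (𝐞 n)‖ / (1 - ‖C‖ ^ 2) := by
  have hSjn : ⟪S (𝐞 j), 𝐞 n⟫_𝕜 = 0 := by
    rw [← inner_conj_symm, lp.inner_single_one_left, isUpperTriangular_iff.mp hS n j hjn, map_zero]
  rw [← lp.inner_single_one_left, inner_apply_eq_sub_of_adjoint_comp_self_eq hM hRS, hSjn,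
    zero_sub, _root_.norm_neg, mul_div_right_comm]
  exact (norm_inner_le_norm _ _).trans (by gcongr)

end Bound

theorem max_abs_sub_one_le_abs_inv_sub {ρ : ℝ} (hρ : 0 < ρ) : max |ρ - 1| |ρ⁻¹ - 1| ≤ |ρ⁻¹ - ρ| := by
  rcases le_total ρ 1 with h | h
  · have : 1 ≤ ρ⁻¹ := one_le_inv₀ hρ |>.mpr h
    rw [abs_of_nonpos (by linarith), abs_of_nonneg (by linarith), abs_of_nonneg (by linarith)]
    exact max_le (by linarith) (by linarith)
  · have : ρ⁻¹ ≤ 1 := inv_le_one_of_one_le₀ h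
    rw [abs_of_nonneg (by linarith), abs_of_nonpos (by linarith), abs_of_nonpos (by linarith)]
    exact max_le (by linarith) (by linarith)

section Diagonal

variable {C R S : ℓ²(ℕ, ℂ) →L[ℂ] ℓ²(ℕ, ℂ)}

theorem max_norm_diag_sub_one_le (hR : IsUpperTriangular R) (hS : IsUpperTriangular S)
    (hM : adjoint R ∘L R = 1 - adjoint C ∘L C) (hRS : R ∘L S = 1) {n : ℕ}
    (hbound : ‖C (S (𝐞 n))‖ ≤ ‖C (𝐞 n)‖ / (1 - ‖C‖ ^ 2))
    (hre : 0 < (R (𝐞 n) n).re) (him : (R (𝐞 n) n).im = 0) :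
    max ‖R (𝐞 n) n - 1‖ ‖S (𝐞 n) n - 1‖ ≤ ‖C (𝐞 n)‖ * ‖C (𝐞 n)‖ / (1 - ‖C‖ ^ 2) := by
  set ρ := (R (𝐞 n) n).re
  have hr : R (𝐞 n) n = ρ := Complex.ext rfl him
  have hprod : R (𝐞 n) n * S (𝐞 n) n = 1 := by
    rw [← hR.apply_of_mem_supported (hS n _ (lp.single_one_mem_supported
      (Finset.mem_Iic.mpr le_rfl))), ← comp_apply, hRS, one_apply_eq_self, lp.single_apply_self]
  have hs : S (𝐞 n) n = (ρ⁻¹ : ℝ) := by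
    rw [eq_inv_of_mul_eq_one_right hprod, hr, Complex.ofReal_inv]
  have hgap : |ρ⁻¹ - ρ| ≤ ‖C (𝐞 n)‖ * ‖C (𝐞 n)‖ / (1 - ‖C‖ ^ 2) := by
    have := norm_adjoint_apply_inverse_single_le hbound n
    rwa [← sub_eq_iff_eq_add'.mpr (apply_inverse_single_eq hM hRS n n), hs, hr, Complex.conj_ofReal,
      ← Complex.ofReal_sub, Complex.norm_real, Real.norm_eq_abs] at this
  refine le_trans ?_ ((max_abs_sub_one_le_abs_inv_sub hre).trans hgap)
  rw [hr, hs, ← Complex.ofReal_one, ← Complex.ofReal_sub, ← Complex.ofReal_sub, Complex.norm_real,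
    Complex.norm_real, Real.norm_eq_abs, Real.norm_eq_abs]

end Diagonal

/-- Theorem 2.4, entrywise estimates: for `0 ≤ j ≤ n`,
`max(|R_{j,n} − δ_{j,n}|, |(R⁻¹)_{j,n} − δ_{j,n}|) ≤ √(ε_j ε_n)/(1 − ‖C‖²)`. -/
theorem grunsky_entry_bounds
    (C R Rinv : lp (fun _ : ℕ => ℂ) 2 →L[ℂ] lp (fun _ : ℕ => ℂ) 2)
    (hC : ‖C‖ < 1)
    (hRtri : ∀ j k : ℕ, k < j → (inner ℂ (lp.single 2 j (1:ℂ)) (R (lp.single 2 k (1:ℂ))) : ℂ) = 0)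
    (hRdiagRe : ∀ n : ℕ,
      0 < (inner ℂ (lp.single 2 n (1:ℂ)) (R (lp.single 2 n (1:ℂ))) : ℂ).re)
    (hRdiagIm : ∀ n : ℕ,
      (inner ℂ (lp.single 2 n (1:ℂ)) (R (lp.single 2 n (1:ℂ))) : ℂ).im = 0)
    (hM : adjoint R ∘L R = 1 - adjoint C ∘L C)
    (hRinv : R ∘L Rinv = 1 ∧ Rinv ∘L R = 1)
    (ε : ℕ → ℝ) (hε : ∀ n, ε n = ‖C (lp.single 2 n (1:ℂ))‖^2) :
    ∀ j n : ℕ, j ≤ n →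
      max (‖((inner ℂ (lp.single 2 j (1:ℂ)) (R (lp.single 2 n (1:ℂ))) : ℂ)
              - if j = n then 1 else 0)‖)
          (‖((inner ℂ (lp.single 2 j (1:ℂ)) (Rinv (lp.single 2 n (1:ℂ))) : ℂ)
              - if j = n then 1 else 0)‖)
        ≤ Real.sqrt (ε j * ε n) / (1 - ‖C‖^2) := by
  obtain ⟨hRS, hSR⟩ := hRinv
  simp only [lp.inner_single_one_left] at hRtri hRdiagRe hRdiagIm ⊢
  have hR : IsUpperTriangular R := isUpperTriangular_iff.mpr hRtri
  have hS : IsUpperTriangular Rinv := hR.of_leftInverse hSR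
  have hbound := norm_apply_inverse_single_le hC hR hS hM hRS
  intro j n hjn
  rw [hε, hε, ← mul_pow, Real.sqrt_sq (by positivity)]
  rcases hjn.lt_or_eq with hjn | rfl
  · rw [if_neg hjn.ne, sub_zero, sub_zero]
    exact max_le (norm_apply_single_le_of_lt hS hM hRS (hbound j) hjn)
      (norm_inverse_apply_single_le_of_lt hR hM hRS (hbound n) hjn)
  · rw [if_pos rfl]
    exact max_norm_diag_sub_one_le hR hS hM hRS (hbound j) (hRdiagRe j) (hRdiagIm j)
end

section
/- For every n ≥ 0 one has ε_n = 1 − ‖R e_n‖² and the chain of inequalities: ε_n ≤ 1 − R_{n,n}² ≤ 1/R_{n,n} − R_{n,n} ≤ ε_n / (1 − ‖C‖²), where R_{n,n} = ⟨R e_n, e_n⟩. -/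
/-!
Write `d = R_{n,n}`. The identity `R*R = 1 - C*C` says `‖R x‖² = ‖x‖² - ‖C x‖²`, which gives
`ε_n = 1 - ‖R e_n‖²`, and `d ≤ ‖R e_n‖` gives `ε_n ≤ 1 - d²`. For the last inequality, the vector
`y = (R⁻¹)* e_n` solves the lower triangular system `R* y = e_n`, so forward substitution gives
`y_n = 1 / d`, whence `1 / d² ≤ ‖y‖² = ⟪e_n, (1 - C*C)⁻¹ e_n⟫ ≤ 1 + ε_n / (1 - ‖C‖²)`.
The rest is elementary: `1 - d² ≤ 1 / d - d ≤ 1 / d² - 1` for every `d > 0`.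
-/

open ContinuousLinearMap ComplexConjugate

local notation "ℓ²" => lp (fun _ : ℕ => ℂ) 2
local notation "𝐞" n:max => (lp.single 2 n (1 : ℂ) : lp (fun _ : ℕ => ℂ) 2)

section HilbertSpace

variable {𝕜 E F G : Type*} [RCLike 𝕜]
  [NormedAddCommGroup E] [InnerProductSpace 𝕜 E] [CompleteSpace E]
  [NormedAddCommGroup F] [InnerProductSpace 𝕜 F] [CompleteSpace F]
  [NormedAddCommGroup G] [InnerProductSpace 𝕜 G] [CompleteSpace G]
  {R : E →L[𝕜] G} {C : E →L[𝕜] F} {S : G →L[𝕜] E}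

theorem norm_sq_apply_eq_of_adjoint_comp_self_eq (hM : adjoint R ∘L R = 1 - adjoint C ∘L C)
    (x : E) : ‖R x‖ ^ 2 = ‖x‖ ^ 2 - ‖C x‖ ^ 2 := by
  have hRR : adjoint R (R x) = x - adjoint C (C x) := congr($hM x)
  have h := congrArg (inner 𝕜 x) hRR
  simp only [inner_sub_right, adjoint_inner_right, inner_self_eq_norm_sq_to_K] at h
  exact_mod_cast h

theorem norm_le_inv_sqrt_of_comp_eq_one (hC : ‖C‖ < 1) (hM : adjoint R ∘L R = 1 - adjoint C ∘L C)
    (hRS : R ∘L S = 1) : ‖S‖ ≤ (√(1 - ‖C‖ ^ 2))⁻¹ := by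
  have hpos : 0 < 1 - ‖C‖ ^ 2 := by nlinarith [norm_nonneg C]
  refine opNorm_le_bound _ (by positivity) fun u => ?_
  have hRSu : R (S u) = u := congr($hRS u)
  have hCSu : ‖C (S u)‖ ≤ ‖C‖ * ‖S u‖ := C.le_opNorm _
  have hsq : (√(1 - ‖C‖ ^ 2) * ‖S u‖) ^ 2 ≤ ‖u‖ ^ 2 := by
    have h := norm_sq_apply_eq_of_adjoint_comp_self_eq hM (S u)
    rw [hRSu] at h
    rw [mul_pow, Real.sq_sqrt hpos.le, h]
    nlinarith [pow_le_pow_left₀ (norm_nonneg _) hCSu 2]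
  rw [le_inv_mul_iff₀ (by positivity)]
  exact (pow_le_pow_iff_left₀ (by positivity) (norm_nonneg u) two_ne_zero).1 hsq

/-- Here `‖S† x‖² = ⟪x, (1 - T)⁻¹ x⟫` with `T = C†C`, and `(1 - T)⁻¹ = 1 + T + T (1 - T)⁻¹ T`. -/
theorem norm_sq_adjoint_apply_le (hC : ‖C‖ < 1) (hM : adjoint R ∘L R = 1 - adjoint C ∘L C)
    (hRS : R ∘L S = 1) (hSR : S ∘L R = 1) (x : E) :
    ‖adjoint S x‖ ^ 2 ≤ ‖x‖ ^ 2 + ‖C x‖ ^ 2 / (1 - ‖C‖ ^ 2) := by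
  have hpos : 0 < 1 - ‖C‖ ^ 2 := by nlinarith [norm_nonneg C]
  set w := adjoint S (adjoint C (C x))
  have hsplit : adjoint S x = R x + w := by
    have hSR' : adjoint S (adjoint R (R x)) = R x := by
      rw [← comp_apply, ← adjoint_comp, hRS, one_def, adjoint_id, id_apply]
    have hRR : adjoint R (R x) = x - adjoint C (C x) := congr($hM x)
    rw [hRR, map_sub] at hSR'
    rw [← hSR', sub_add_cancel]
  have hcross : RCLike.re (inner 𝕜 (R x) w) = ‖C x‖ ^ 2 := by
    have : S (R x) = x := congr($hSR x)
    rw [adjoint_inner_right, this, adjoint_inner_right, inner_self_eq_norm_sq_to_K]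
    norm_cast
  have hw : ‖w‖ ≤ (√(1 - ‖C‖ ^ 2))⁻¹ * (‖C‖ * ‖C x‖) := by
    calc ‖w‖ ≤ ‖S‖ * ‖adjoint C (C x)‖ := by
          simpa using (adjoint S).le_opNorm (adjoint C (C x))
      _ ≤ (√(1 - ‖C‖ ^ 2))⁻¹ * (‖C‖ * ‖C x‖) := by
          gcongr
          · exact norm_le_inv_sqrt_of_comp_eq_one hC hM hRS
          · simpa using (adjoint C).le_opNorm (C x)
  have hw_sq : ‖w‖ ^ 2 ≤ ‖C‖ ^ 2 * ‖C x‖ ^ 2 / (1 - ‖C‖ ^ 2) := by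
    calc ‖w‖ ^ 2 ≤ ((√(1 - ‖C‖ ^ 2))⁻¹ * (‖C‖ * ‖C x‖)) ^ 2 := by gcongr
      _ = ‖C‖ ^ 2 * ‖C x‖ ^ 2 / (1 - ‖C‖ ^ 2) := by
          rw [mul_pow, inv_pow, Real.sq_sqrt hpos.le]; ring
  calc ‖adjoint S x‖ ^ 2 = ‖x‖ ^ 2 + ‖C x‖ ^ 2 + ‖w‖ ^ 2 := by
        rw [hsplit, norm_add_sq (𝕜 := 𝕜), hcross, norm_sq_apply_eq_of_adjoint_comp_self_eq hM]; ring
    _ ≤ ‖x‖ ^ 2 + ‖C x‖ ^ 2 + ‖C‖ ^ 2 * ‖C x‖ ^ 2 / (1 - ‖C‖ ^ 2) := by gcongr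
    _ = ‖x‖ ^ 2 + ‖C x‖ ^ 2 / (1 - ‖C‖ ^ 2) := by field_simp; ring

end HilbertSpace

theorem lp.inner_single_one_left_s7 (f : ℓ²) (n : ℕ) : inner ℂ (𝐞 n) f = f n := by
  simp [lp.inner_single_left, RCLike.inner_apply]

theorem inner_apply_single_eq_sum_of_upper {R : ℓ² →L[ℂ] ℓ²}
    (hR : ∀ j k : ℕ, k < j → inner ℂ (𝐞 j) (R (𝐞 k)) = 0) (k : ℕ) (y : ℓ²) :
    inner ℂ (R (𝐞 k)) y = ∑ j ∈ Finset.range (k + 1), conj (R (𝐞 k) j) * y j := by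
  rw [lp.inner_eq_tsum, tsum_eq_sum (s := Finset.range (k + 1)) fun j hj => ?_]
  · simp [RCLike.inner_apply, mul_comm]
  · rw [Finset.mem_range, not_lt, Nat.succ_le_iff] at hj
    rw [← lp.inner_single_one_left_s7, hR j k hj, inner_zero_left]

theorem conj_diag_mul_apply_of_adjoint_apply_eq_single {R : ℓ² →L[ℂ] ℓ²}
    (hR : ∀ j k : ℕ, k < j → inner ℂ (𝐞 j) (R (𝐞 k)) = 0)
    (hdiag : ∀ k, inner ℂ (𝐞 k) (R (𝐞 k)) ≠ 0) {y : ℓ²} {n : ℕ} (hy : adjoint R y = 𝐞 n) :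
    conj (inner ℂ (𝐞 n) (R (𝐞 n))) * y n = 1 := by
  have hrow : ∀ k, inner ℂ (R (𝐞 k)) y = (𝐞 n) k := fun k => by
    rw [← adjoint_inner_right, hy, lp.inner_single_one_left_s7]
  have hlast : ∀ k, (∀ j < k, y j = 0) →
      inner ℂ (R (𝐞 k)) y = conj (inner ℂ (𝐞 k) (R (𝐞 k))) * y k := fun k hk => by
    rw [inner_apply_single_eq_sum_of_upper hR, Finset.sum_range_succ,
      Finset.sum_eq_zero fun j hj => by rw [hk j (Finset.mem_range.1 hj), mul_zero], zero_add,
      lp.inner_single_one_left_s7]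
  -- forward substitution in the lower triangular system `R† y = e n`
  have hzero : ∀ k < n, y k = 0 := by
    intro k
    induction k using Nat.strong_induction_on with
    | _ k ih =>
      intro hk
      have h := (hrow k).symm.trans (hlast k fun j hj => ih j hj (hj.trans hk))
      rw [lp.single_apply_ne _ _ _ hk.ne] at h
      exact (mul_eq_zero.1 h.symm).resolve_left ((map_ne_zero _).2 (hdiag k))
  rw [← hlast n hzero, hrow, lp.single_apply_self]

theorem one_sub_sq_le_inv_sub {d : ℝ} (hd : 0 < d) : 1 - d ^ 2 ≤ 1 / d - d := by
  have key : 1 / d - d - (1 - d ^ 2) = (1 - d) ^ 2 * (1 + d) / d := by field_simp; ring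
  have : 0 ≤ (1 - d) ^ 2 * (1 + d) / d := by positivity
  linarith

theorem inv_sub_le_inv_sq_sub_one {d : ℝ} (hd : 0 < d) : 1 / d - d ≤ (1 / d) ^ 2 - 1 := by
  have key : (1 / d) ^ 2 - 1 - (1 / d - d) = (1 - d) ^ 2 * (1 + d) / d ^ 2 := by
    field_simp; ring
  have : 0 ≤ (1 - d) ^ 2 * (1 + d) / d ^ 2 := by positivity
  linarith

/-- Remark 2.5: `ε_n = 1 − ‖R e_n‖²` and
`ε_n ≤ 1 − R_{n,n}² ≤ 1/R_{n,n} − R_{n,n} ≤ ε_n/(1 − ‖C‖²)`. -/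
theorem grunsky_diagonal_chain
    (C R Rinv : lp (fun _ : ℕ => ℂ) 2 →L[ℂ] lp (fun _ : ℕ => ℂ) 2)
    (hC : ‖C‖ < 1)
    (hRtri : ∀ j k : ℕ, k < j → (inner ℂ (lp.single 2 j (1:ℂ)) (R (lp.single 2 k (1:ℂ))) : ℂ) = 0)
    (hRdiagRe : ∀ n : ℕ,
      0 < (inner ℂ (lp.single 2 n (1:ℂ)) (R (lp.single 2 n (1:ℂ))) : ℂ).re)
    (hRdiagIm : ∀ n : ℕ,
      (inner ℂ (lp.single 2 n (1:ℂ)) (R (lp.single 2 n (1:ℂ))) : ℂ).im = 0)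
    (hM : adjoint R ∘L R = 1 - adjoint C ∘L C)
    (hRinv : R ∘L Rinv = 1 ∧ Rinv ∘L R = 1)
    (ε : ℕ → ℝ) (hε : ∀ n, ε n = ‖C (lp.single 2 n (1:ℂ))‖^2) :
    ∀ n : ℕ,
      ε n = 1 - ‖R (lp.single 2 n (1:ℂ))‖^2 ∧
      ε n ≤ 1 - (inner ℂ (lp.single 2 n (1:ℂ)) (R (lp.single 2 n (1:ℂ))) : ℂ).re ^ 2 ∧
      1 - (inner ℂ (lp.single 2 n (1:ℂ)) (R (lp.single 2 n (1:ℂ))) : ℂ).re ^ 2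
        ≤ 1 / (inner ℂ (lp.single 2 n (1:ℂ)) (R (lp.single 2 n (1:ℂ))) : ℂ).re
          - (inner ℂ (lp.single 2 n (1:ℂ)) (R (lp.single 2 n (1:ℂ))) : ℂ).re ∧
      1 / (inner ℂ (lp.single 2 n (1:ℂ)) (R (lp.single 2 n (1:ℂ))) : ℂ).re
          - (inner ℂ (lp.single 2 n (1:ℂ)) (R (lp.single 2 n (1:ℂ))) : ℂ).re
        ≤ ε n / (1 - ‖C‖^2) := by
  intro n
  set d := (inner ℂ (𝐞 n) (R (𝐞 n))).re with hd
  have hd0 : 0 < d := hRdiagRe n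
  have hdiag : inner ℂ (𝐞 n) (R (𝐞 n)) = d := Complex.ext (by simp [hd]) (by simp [hRdiagIm n])
  have hnorm_e : ‖𝐞 n‖ = 1 := by simp [lp.norm_single]
  have hεR : ε n = 1 - ‖R (𝐞 n)‖ ^ 2 := by
    rw [hε, norm_sq_apply_eq_of_adjoint_comp_self_eq hM, hnorm_e]; ring
  have hdR : d ≤ ‖R (𝐞 n)‖ := by
    simpa [hnorm_e] using (Complex.re_le_norm _).trans (norm_inner_le_norm (𝕜 := ℂ) (𝐞 n) (R (𝐞 n)))
  set y := adjoint Rinv (𝐞 n)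
  have hy : adjoint R y = 𝐞 n := by
    rw [← comp_apply, ← adjoint_comp, hRinv.2, one_def, adjoint_id, id_apply]
  have hdy : d * ‖y n‖ = 1 := by
    have h := conj_diag_mul_apply_of_adjoint_apply_eq_single hRtri
      (fun k h => by simpa [h] using hRdiagRe k) hy
    rw [hdiag, Complex.conj_ofReal] at h
    simpa [abs_of_pos hd0] using congrArg norm h
  have hdY : 1 / d ≤ ‖y‖ := by
    rw [div_le_iff₀ hd0, ← hdy, mul_comm]
    exact mul_le_mul_of_nonneg_right (lp.norm_apply_le_norm two_ne_zero y n) hd0.le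
  have hY : ‖y‖ ^ 2 ≤ 1 + ε n / (1 - ‖C‖ ^ 2) := by
    simpa only [hnorm_e, one_pow, ← hε] using norm_sq_adjoint_apply_le hC hM hRinv.1 hRinv.2 (𝐞 n)
  refine ⟨hεR, by nlinarith, one_sub_sq_le_inv_sub hd0, ?_⟩
  calc 1 / d - d ≤ (1 / d) ^ 2 - 1 := inv_sub_le_inv_sq_sub_one hd0
    _ ≤ ‖y‖ ^ 2 - 1 := by gcongr
    _ ≤ ε n / (1 - ‖C‖ ^ 2) := by linarith
end
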